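/- arXiv:1111.3517 — 2 statements merged into one kernel-verified Lean document; each statement's English description precedes it below -/
import Mathlib

section
/- For any graphs G and H, γ(G □ H) ≥ γ(G)·γ_R(H)/3. -/
open Finset

/-- A set `S` is a dominating set of `G` if every vertex outside `S` has a neighbor in `S`. -/
def IsDominatingSet {V : Type*} (G : SimpleGraph V) (S : Set V) : Prop :=
  ∀ v, v ∉ S → ∃ u ∈ S, G.Adj u v

/-- The domination number `γ(G)`. -/
noncomputable def domNum {V : Type*} [Fintype V] (G : SimpleGraph V) : ℕ :=
  sInf {n | ∃ S : Finset V, IsDominatingSet G ↑S ∧ S.card = n}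

/-- A Roman dominating function: values in {0,1,2}, every vertex of value 0 has a
neighbor of value 2. -/
def IsRDF {V : Type*} (G : SimpleGraph V) (f : V → ℕ) : Prop :=
  (∀ v, f v ≤ 2) ∧ ∀ v, f v = 0 → ∃ u, G.Adj u v ∧ f u = 2

/-- The Roman domination number `γ_R(G)`. -/
noncomputable def romanDomNum {V : Type*} [Fintype V] (G : SimpleGraph V) : ℕ :=
  sInf {n | ∃ f : V → ℕ, IsRDF G f ∧ ∑ v, f v = n}

/-- The strong product of graphs. -/
def strongProd {V W : Type*} (G : SimpleGraph V) (H : SimpleGraph W) :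
    SimpleGraph (V × W) where
  Adj x y := x ≠ y ∧ (x.1 = y.1 ∨ G.Adj x.1 y.1) ∧ (x.2 = y.2 ∨ H.Adj x.2 y.2)
  symm := ⟨fun x y => by
    rintro ⟨h, h1, h2⟩
    refine ⟨h.symm, ?_, ?_⟩
    · cases h1 with
      | inl h => exact Or.inl h.symm
      | inr h => exact Or.inr h.symm
    · cases h2 with
      | inl h => exact Or.inl h.symm
      | inr h => exact Or.inr h.symm⟩
  loopless := ⟨fun x => by simp⟩

/-- `G` has an efficient dominating set: a dominating set whose elements have
pairwise disjoint closed neighborhoods. -/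
def HasEfficientDomSet {V : Type*} (G : SimpleGraph V) : Prop :=
  ∃ S : Finset V, IsDominatingSet G ↑S ∧
    ∀ u ∈ S, ∀ v ∈ S, u ≠ v →
      Disjoint (insert u (G.neighborSet u)) (insert v (G.neighborSet v))

/-!
Fix a minimum dominating set `D` of `G □ H`, a minimum dominating set `T` of `G`, and send every
vertex `g` of `G` to a vertex `π g ∈ T` dominating it. For `u ∈ T`, let `Q u = projOverClass D π u`
be the projection to `H` of the part of `D` lying over `π⁻¹ u`. Weight `2` on `Q u` and `1` on the
set `U u` of vertices that `Q u` leaves undominated is a Roman dominating function, so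
`γ_R(H) ≤ 2 |Q u| + |U u|`. The sets `Q u` together have at most `|D|` elements. For fixed `h`,
the projection of the layer `D ∩ (V × {h})` and the `u` with `h ∉ U u` dominate `G`, so at most
`|D ∩ (V × {h})|` of the `u` have `h ∈ U u`. Summing gives `γ(G) γ_R(H) ≤ 3 |D|`.
-/

open SimpleGraph

section

variable {V W : Type*}

lemma IsDominatingSet.exists_eq_or_adj {G : SimpleGraph V} {S : Set V}
    (hS : IsDominatingSet G S) (v : V) : ∃ u ∈ S, u = v ∨ G.Adj u v := by
  by_cases hv : v ∈ S
  · exact ⟨v, hv, Or.inl rfl⟩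
  · obtain ⟨u, hu, huv⟩ := hS v hv
    exact ⟨u, hu, Or.inr huv⟩

lemma domNum_le_card [Fintype V] {G : SimpleGraph V} {S : Finset V}
    (hS : IsDominatingSet G S) : domNum G ≤ #S :=
  Nat.sInf_le ⟨S, hS, rfl⟩

lemma exists_isDominatingSet_card_eq_domNum [Fintype V] (G : SimpleGraph V) :
    ∃ S : Finset V, IsDominatingSet G S ∧ #S = domNum G :=
  Nat.sInf_mem (s := {n | ∃ S : Finset V, IsDominatingSet G ↑S ∧ #S = n})
    ⟨_, univ, fun v hv => (hv (mem_univ v)).elim, rfl⟩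

lemma romanDomNum_le_two_mul_card_add_card [Fintype W] {H : SimpleGraph W} {S U : Finset W}
    (hU : ∀ w ∉ U, ∃ s ∈ S, s = w ∨ H.Adj s w) : romanDomNum H ≤ 2 * #S + #U := by
  classical
  let f : W → ℕ := fun w => if w ∈ S then 2 else if w ∈ U then 1 else 0
  have hf : IsRDF H f := by
    refine ⟨fun w => by simp only [f]; split_ifs <;> omega, fun w hw => ?_⟩
    simp only [f] at hw
    obtain ⟨s, hs, rfl | hsw⟩ := hU w (by grind)
    · grind
    · exact ⟨s, hsw, if_pos hs⟩
  calc romanDomNum H ≤ ∑ w, f w := Nat.sInf_le ⟨f, hf, rfl⟩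
    _ ≤ ∑ w, ((if w ∈ S then 2 else 0) + if w ∈ U then 1 else 0) :=
        sum_le_sum fun w _ => by simp only [f]; split_ifs <;> omega
    _ = 2 * #S + #U := by
        rw [sum_add_distrib, sum_ite_mem, sum_ite_mem, univ_inter, univ_inter, sum_const,
          sum_const, smul_eq_mul, smul_eq_mul, mul_one, mul_comm]

lemma Finset.sum_card_image_fiber_le {α β γ : Type*} [DecidableEq β] [DecidableEq γ]
    {s : Finset α} {t : Finset β} {f : α → β} (g : α → γ) (hf : ∀ a ∈ s, f a ∈ t) :
    ∑ b ∈ t, #({a ∈ s | f a = b}.image g) ≤ #s := by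
  rw [card_eq_sum_card_fiberwise hf]
  exact sum_le_sum fun b _ => card_image_le

def projOverClass [DecidableEq V] [DecidableEq W] (D : Finset (V × W)) (π : V → V) (u : V) :
    Finset W :=
  {x ∈ D | π x.1 = u}.image Prod.snd

section BoxProd

variable [DecidableEq V] [DecidableEq W] {G : SimpleGraph V} {H : SimpleGraph W}
  [DecidableRel H.Adj] {D : Finset (V × W)} {T : Finset V} {π : V → V}

lemma isDominatingSet_image_layer_union
    (hD : IsDominatingSet (G □ H) D) (hπT : ∀ g, π g ∈ T) (hπ : ∀ g, π g = g ∨ G.Adj (π g) g)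
    (h : W) :
    IsDominatingSet G ↑({x ∈ D | x.2 = h}.image Prod.fst ∪
      {u ∈ T | ∃ s ∈ projOverClass D π u, s = h ∨ H.Adj s h}) := by
  set C := {u ∈ T | ∃ s ∈ projOverClass D π u, s = h ∨ H.Adj s h}
  intro g hg
  have hcover : ∀ x ∈ D, x.1 = g → (x.2 = h ∨ H.Adj x.2 h) →
      ∃ u ∈ (↑({x ∈ D | x.2 = h}.image Prod.fst ∪ C) : Set V), G.Adj u g := by
    rintro x hx rfl hxh
    have hπg : π x.1 ∈ C :=
      mem_filter.2 ⟨hπT _, x.2, mem_image_of_mem _ (mem_filter.2 ⟨hx, rfl⟩), hxh⟩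
    obtain hπx | hadj := hπ x.1
    · exact (hg (mem_coe.2 (mem_union_right _ (hπx ▸ hπg)))).elim
    · exact ⟨π x.1, mem_coe.2 (mem_union_right _ hπg), hadj⟩
  obtain ⟨x, hx, rfl | hxg⟩ := hD.exists_eq_or_adj (g, h)
  · exact hcover _ hx rfl (Or.inl rfl)
  obtain ⟨hadj, hxh⟩ | ⟨hadj, hxg⟩ := boxProd_adj.1 hxg
  · have hxL : x.1 ∈ {x ∈ D | x.2 = h}.image Prod.fst :=
      mem_image_of_mem _ (mem_filter.2 ⟨hx, hxh⟩)
    exact ⟨x.1, mem_coe.2 (mem_union_left _ hxL), hadj⟩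
  · exact hcover x hx hxg (Or.inr hadj)

lemma card_filter_not_covered_le [Fintype V] (hD : IsDominatingSet (G □ H) D)
    (hT : #T = domNum G) (hπT : ∀ g, π g ∈ T) (hπ : ∀ g, π g = g ∨ G.Adj (π g) g) (h : W) :
    #{u ∈ T | ¬∃ s ∈ projOverClass D π u, s = h ∨ H.Adj s h} ≤
      #({x ∈ D | x.2 = h}.image Prod.fst) := by
  have hdom := domNum_le_card (isDominatingSet_image_layer_union hD hπT hπ h)
  have hunion := card_union_le ({x ∈ D | x.2 = h}.image Prod.fst)
    {u ∈ T | ∃ s ∈ projOverClass D π u, s = h ∨ H.Adj s h}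
  have hsplit := card_filter_add_card_filter_not (s := T)
    (fun u => ∃ s ∈ projOverClass D π u, s = h ∨ H.Adj s h)
  omega

end BoxProd

lemma domNum_mul_romanDomNum_le_three_mul [Fintype V] [Fintype W]
    (G : SimpleGraph V) (H : SimpleGraph W) :
    domNum G * romanDomNum H ≤ 3 * domNum (G □ H) := by
  classical
  obtain ⟨D, hD, hDcard⟩ := exists_isDominatingSet_card_eq_domNum (G □ H)
  obtain ⟨T, hT, hTcard⟩ := exists_isDominatingSet_card_eq_domNum G
  choose π hπT hπ using hT.exists_eq_or_adj
  let covered (u : V) (w : W) : Prop := ∃ s ∈ projOverClass D π u, s = w ∨ H.Adj s w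
  have hroman (u : V) : romanDomNum H ≤ 2 * #(projOverClass D π u) + #{w | ¬covered u w} :=
    romanDomNum_le_two_mul_card_add_card fun w hw => by simpa using hw
  have hproj : ∑ u ∈ T, #(projOverClass D π u) ≤ #D :=
    sum_card_image_fiber_le _ fun x _ => hπT x.1
  have huncovered : ∑ u ∈ T, #{w | ¬covered u w} ≤ #D := calc
    _ = ∑ w, #{u ∈ T | ¬covered u w} :=
        sum_card_bipartiteAbove_eq_sum_card_bipartiteBelow (fun u w => ¬covered u w)
    _ ≤ ∑ w, #({x ∈ D | x.2 = w}.image Prod.fst) :=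
        sum_le_sum fun w _ => card_filter_not_covered_le hD hTcard hπT hπ w
    _ ≤ #D := sum_card_image_fiber_le _ fun x _ => mem_univ _
  rw [← hTcard, ← hDcard]
  calc #T * romanDomNum H = ∑ u ∈ T, romanDomNum H := by rw [sum_const, smul_eq_mul]
    _ ≤ ∑ u ∈ T, (2 * #(projOverClass D π u) + #{w | ¬covered u w}) :=
        sum_le_sum fun u _ => hroman u
    _ = 2 * ∑ u ∈ T, #(projOverClass D π u) + ∑ u ∈ T, #{w | ¬covered u w} := by
        rw [sum_add_distrib, mul_sum]
    _ ≤ 3 * #D := by omega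

end

theorem stmt6 {V W : Type*} [Fintype V] [Fintype W]
    (G : SimpleGraph V) (H : SimpleGraph W) :
    (domNum (G.boxProd H) : ℝ) ≥ (domNum G : ℝ) * romanDomNum H / 3 := by
  rw [ge_iff_le, div_le_iff₀ three_pos]
  exact_mod_cast (domNum_mul_romanDomNum_le_three_mul G H).trans_eq (mul_comm _ _)
end

section
/- If G is a graph of order n with at least one connected component of order greater than two and H is a graph that is not Roman (γ_R(H) < 2γ(H)), then γ_R(G □ H) ≤ n·γ_R(H) − 1. -/
/-!
Take a minimum Roman dominating function `f` of `H`. If `f` took no value `1`, the vertices of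
value `2` would dominate `H`, giving `γ_R(H) ≥ 2γ(H)`; so, `H` not being Roman, `f w₀ = 1` for
some `w₀`. On `G □ H` the function `(v, w) ↦ f w` is Roman dominating of weight `n·γ_R(H)`, and its
layer `V × {w₀}` carries weight `n`. Replace that layer by a minimum Roman dominating function of
`G`: since `f w₀ ≠ 2`, no vertex outside the layer relied on it, so the result is still Roman
dominating, of weight `n·γ_R(H) - n + γ_R(G)`. Finally a component of order at least three has a
vertex `b` with two distinct neighbours, and `2` on `b`, `0` on those neighbours and `1` elsewhere
shows `γ_R(G) ≤ n - 1`.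
-/

open Finset

section Roman

variable {V : Type*} [Fintype V] {G : SimpleGraph V}

lemma romanDomNum_le_sum {f : V → ℕ} (hf : IsRDF G f) : romanDomNum G ≤ ∑ v, f v :=
  Nat.sInf_le ⟨f, hf, rfl⟩

lemma exists_isRDF_sum_eq_romanDomNum (G : SimpleGraph V) :
    ∃ f : V → ℕ, IsRDF G f ∧ ∑ v, f v = romanDomNum G :=
  Nat.sInf_mem (s := {n | ∃ f : V → ℕ, IsRDF G f ∧ ∑ v, f v = n})
    ⟨_, fun _ => 1, ⟨fun _ => one_le_two, fun _ h => absurd h one_ne_zero⟩, rfl⟩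

lemma IsRDF.two_mul_domNum_le_sum {f : V → ℕ} (hf : IsRDF G f) (hf1 : ∀ v, f v ≠ 1) :
    2 * domNum G ≤ ∑ v, f v := by
  set S := univ.filter (fun v => f v = 2)
  have hS : IsDominatingSet G ↑S := by
    intro v hv
    have hv0 : f v = 0 := by
      have := hf.1 v; have := hf1 v; simp [S] at hv; omega
    obtain ⟨u, hadj, hu⟩ := hf.2 v hv0
    exact ⟨u, by simp [S, hu], hadj⟩
  have hsum : ∑ v, f v = 2 * S.card := by
    rw [card_eq_sum_ones, mul_sum, sum_filter]
    refine sum_congr rfl fun v _ => ?_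
    have := hf.1 v; have := hf1 v
    split_ifs <;> omega
  rw [hsum]
  exact Nat.mul_le_mul_left 2 (Nat.sInf_le ⟨S, hS, rfl⟩)

lemma romanDomNum_add_one_le_card {a b c : V} (hba : G.Adj b a) (hbc : G.Adj b c)
    (hac : a ≠ c) : romanDomNum G + 1 ≤ Fintype.card V := by
  classical
  let φ : V → ℕ := fun v => if v = b then 2 else if v = a ∨ v = c then 0 else 1
  have hφ : IsRDF G φ := by
    refine ⟨fun v => by simp only [φ]; split_ifs <;> omega, fun v hv => ⟨b, ?_, by simp [φ]⟩⟩
    simp only [φ] at hv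
    split_ifs at hv with hb hac'
    rcases hac' with rfl | rfl
    exacts [hba, hbc]
  have hpoint : ∀ v, φ v + (if v = a then 1 else 0) + (if v = c then 1 else 0) =
      1 + if v = b then 1 else 0 := by
    intro v
    have := hba.ne'; have := hbc.ne'
    simp only [φ]
    split_ifs <;> simp_all
  have hsum : ∑ v, φ v + 1 + 1 = Fintype.card V + 1 := by
    simpa [sum_add_distrib] using sum_congr rfl fun v (_ : v ∈ univ) => hpoint v
  have := romanDomNum_le_sum hφ
  omega

end Roman

section BoxProd

variable {V W : Type*} {G : SimpleGraph V} {H : SimpleGraph W}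

def replaceLayer [DecidableEq W] (f : W → ℕ) (w₀ : W) (φ : V → ℕ) : V × W → ℕ :=
  fun x => if x.2 = w₀ then φ x.1 else f x.2

lemma isRDF_replaceLayer [DecidableEq W] {f : W → ℕ} {φ : V → ℕ} {w₀ : W}
    (hφ : IsRDF G φ) (hf : IsRDF H f) (hw₀ : f w₀ ≠ 2) :
    IsRDF (G.boxProd H) (replaceLayer f w₀ φ) := by
  refine ⟨fun ⟨v, w⟩ => ?_, fun ⟨v, w⟩ hvw => ?_⟩
  · unfold replaceLayer
    split_ifs
    exacts [hφ.1 v, hf.1 w]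
  by_cases hw : w = w₀
  · subst hw
    obtain ⟨u, hadj, hu⟩ := hφ.2 v (by simpa [replaceLayer] using hvw)
    exact ⟨(u, w), SimpleGraph.boxProd_adj.2 (Or.inl ⟨hadj, rfl⟩),
      by simpa [replaceLayer] using hu⟩
  · obtain ⟨t, hadj, ht⟩ := hf.2 w (by simpa [replaceLayer, hw] using hvw)
    have ht₀ : t ≠ w₀ := by rintro rfl; exact hw₀ ht
    exact ⟨(v, t), SimpleGraph.boxProd_adj.2 (Or.inr ⟨hadj, rfl⟩),
      by simpa [replaceLayer, ht₀] using ht⟩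

variable [Fintype V] [Fintype W]

lemma sum_replaceLayer_add [DecidableEq W] (f : W → ℕ) (w₀ : W) (φ : V → ℕ) :
    ∑ x, replaceLayer f w₀ φ x + Fintype.card V * f w₀ =
      Fintype.card V * ∑ w, f w + ∑ v, φ v := by
  have hlayer : ∀ w, ∑ v, replaceLayer f w₀ φ (v, w) +
      (if w = w₀ then Fintype.card V * f w₀ else 0) =
        Fintype.card V * f w + if w = w₀ then ∑ v, φ v else 0 := by
    intro w
    by_cases hw : w = w₀
    · subst hw; simp [replaceLayer, add_comm]
    · simp [replaceLayer, hw]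
  calc ∑ x, replaceLayer f w₀ φ x + Fintype.card V * f w₀
      = ∑ w, (∑ v, replaceLayer f w₀ φ (v, w) +
          if w = w₀ then Fintype.card V * f w₀ else 0) := by
        rw [Fintype.sum_prod_type_right, sum_add_distrib, sum_ite_eq']; simp
    _ = ∑ w, (Fintype.card V * f w + if w = w₀ then ∑ v, φ v else 0) :=
        sum_congr rfl fun w _ => hlayer w
    _ = Fintype.card V * ∑ w, f w + ∑ v, φ v := by
        rw [sum_add_distrib, ← mul_sum, sum_ite_eq']; simp

lemma romanDomNum_boxProd_add_card_le {f : W → ℕ} {w₀ : W} (hf : IsRDF H f) (hw₀ : f w₀ = 1) :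
    romanDomNum (G.boxProd H) + Fintype.card V ≤
      Fintype.card V * ∑ w, f w + romanDomNum G := by
  classical
  obtain ⟨φ, hφ, hφsum⟩ := exists_isRDF_sum_eq_romanDomNum G
  have hle := romanDomNum_le_sum (isRDF_replaceLayer (w₀ := w₀) hφ hf (by omega))
  have hsum := sum_replaceLayer_add f w₀ φ
  rw [hw₀, mul_one, hφsum] at hsum
  omega

end BoxProd

lemma SimpleGraph.Walk.IsPath.adj_or_exists_adj_adj {V : Type*} {G : SimpleGraph V} {x y : V}
    {p : G.Walk x y} (hp : p.IsPath) (hxy : x ≠ y) :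
    G.Adj x y ∨ ∃ a b c, G.Adj b a ∧ G.Adj b c ∧ a ≠ c := by
  cases p with
  | nil => exact absurd rfl hxy
  | cons h q =>
    cases q with
    | nil => exact Or.inl h
    | cons h' r =>
      refine Or.inr ⟨x, _, _, h.symm, h', fun hx => ?_⟩
      subst hx
      simp at hp

lemma SimpleGraph.ConnectedComponent.exists_adj_adj_of_two_lt_card {V : Type*}
    {G : SimpleGraph V} [Finite V] (C : G.ConnectedComponent) (hC : 2 < Nat.card C.supp) :
    ∃ a b c, G.Adj b a ∧ G.Adj b c ∧ a ≠ c := by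
  classical
  rw [Nat.card_coe_set_eq, Set.two_lt_ncard_iff] at hC
  obtain ⟨u, v, w, hu, hv, hw, huv, huw, hvw⟩ := hC
  have path_from_u : ∀ {x}, x ∈ C.supp → u ≠ x →
      G.Adj u x ∨ ∃ a b c, G.Adj b a ∧ G.Adj b c ∧ a ≠ c := fun hx hux =>
    let p := (SimpleGraph.ConnectedComponent.exact (hu.trans hx.symm)).some.toPath
    p.2.adj_or_exists_adj_adj hux
  rcases path_from_u hv huv with huv' | h
  · rcases path_from_u hw huw with huw' | h
    exacts [⟨v, u, w, huv', huw', hvw⟩, h]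
  · exact h

theorem stmt15 {V W : Type*} [Fintype V] [Fintype W]
    (G : SimpleGraph V) (H : SimpleGraph W)
    (hG : ∃ c : G.ConnectedComponent, 2 < Nat.card c.supp)
    (hH : romanDomNum H < 2 * domNum H) :
    (romanDomNum (G.boxProd H) : ℤ) ≤ Fintype.card V * romanDomNum H - 1 := by
  obtain ⟨f, hf, hfsum⟩ := exists_isRDF_sum_eq_romanDomNum H
  obtain ⟨w₀, hw₀⟩ : ∃ w₀, f w₀ = 1 := by
    by_contra! h
    have := hf.two_mul_domNum_le_sum h
    omega
  obtain ⟨C, hC⟩ := hG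
  obtain ⟨a, b, c, hba, hbc, hac⟩ := C.exists_adj_adj_of_two_lt_card hC
  have hbox := romanDomNum_boxProd_add_card_le (G := G) hf hw₀
  have hG' := romanDomNum_add_one_le_card hba hbc hac
  rw [hfsum] at hbox
  omega
end
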